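/- arXiv:2103.06394 — 6 statements merged into one kernel-verified Lean document; each statement's English description precedes it below -/
import Mathlib

section
/- Let G be a group, φ : G → G a group homomorphism and r ≥ 1 a natural number. Assume that the Lang-type map a ↦ a⁻¹·φ^r(a) is surjective on G. Then the norm map N : G → G, N(x) = x·φ(x)·φ²(x)⋯φ^{r-1}(x) (ordered product for i = 0, …, r−1), is surjective. -/
theorem MonoidHom.prod_range_iterate_inv_mul_self {G : Type*} [Group G] (φ : G →* G) (a : G)
    (r : ℕ) : ((List.range r).map fun i => (⇑φ)^[i] (a⁻¹ * φ a)).prod = a⁻¹ * (⇑φ)^[r] a := by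
  induction r with
  | zero => simp
  | succ n ih =>
    rw [List.range_succ, List.map_append, List.prod_append, ih]
    simp [Function.iterate_succ_apply', ← Function.iterate_succ_apply, mul_assoc]

theorem norm_map_surjective_general {G : Type*} [Group G] (φ : G →* G) (r : ℕ)
    (hLang : Function.Surjective (fun a : G => a⁻¹ * (⇑φ)^[r] a)) :
    Function.Surjective
      (fun x : G => ((List.range r).map (fun i => (⇑φ)^[i] x)).prod) := by
  intro g
  obtain ⟨a, rfl⟩ := hLang g
  exact ⟨a⁻¹ * φ a, φ.prod_range_iterate_inv_mul_self a r⟩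

/-- If the Lang-type map `a ↦ a⁻¹ * φ^r a` is surjective on a group `G`
(for a group homomorphism `φ : G → G` and `r ≥ 1`), then the twisted norm map
`x ↦ x * φ x * φ² x * ⋯ * φ^{r-1} x` is surjective. -/
theorem norm_map_surjective {G : Type*} [Group G] (φ : G →* G) (r : ℕ) (hr : 1 ≤ r)
    (hLang : Function.Surjective (fun a : G => a⁻¹ * (⇑φ)^[r] a)) :
    Function.Surjective
      (fun x : G => ((List.range r).map (fun i => (⇑φ)^[i] x)).prod) :=
  norm_map_surjective_general φ r hLang
end

section
/- Let G be a group and E a subgroup of G. Then E is almost abelian in G if and only if the image of E under the quotient map G → G/Z(G) (equivalently, the subgroup E·Z(G)/Z(G)) is almost abelian in G/Z(G). -/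
open scoped commutatorElement

/-- A subgroup `D` of a group `G` is *almost abelian in `G`* if there is an `n` such that
the image of `D` in `G / Z_n(G)` is abelian, i.e. all commutators of elements of `D` lie
in the `n`-th term of the upper central series of `G`. -/
def AlmostAbelian {G : Type*} [Group G] (D : Subgroup G) : Prop :=
  ∃ n : ℕ, ∀ a ∈ D, ∀ b ∈ D, ⁅a, b⁆ ∈ upperCentralSeries G n

/-!
Since `Z_n(G/Z(G)) = Z_{n+1}(G)/Z(G)` and the quotient map sends commutators to commutators,
all commutators of `E` lie in `Z_{n+1}(G)` exactly when those of its image lie in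
`Z_n(G/Z(G))`. As the upper central series is increasing, the shift by one is harmless.
-/

section

variable {G : Type*} [Group G]

theorem almostAbelian_iff_exists_succ (D : Subgroup G) :
    AlmostAbelian D ↔ ∃ n : ℕ, ∀ a ∈ D, ∀ b ∈ D, ⁅a, b⁆ ∈ Subgroup.upperCentralSeries G (n + 1) :=
  ⟨fun ⟨n, hn⟩ => ⟨n, fun a ha b hb =>
      Subgroup.upperCentralSeries_mono G n.le_succ (hn a ha b hb)⟩,
    fun ⟨n, hn⟩ => ⟨n + 1, hn⟩⟩

theorem mk_mem_upperCentralSeries_quotient_center_iff {g : G} {n : ℕ} :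
    (g : G ⧸ Subgroup.center G) ∈ Subgroup.upperCentralSeries (G ⧸ Subgroup.center G) n ↔
      g ∈ Subgroup.upperCentralSeries G (n + 1) := by
  rw [← Subgroup.comap_upperCentralSeries_quotient_center, Subgroup.mem_comap,
    QuotientGroup.mk'_apply]

theorem almostAbelian_map_iff {H : Type*} [Group H] (f : G →* H) (D : Subgroup G) :
    AlmostAbelian (D.map f) ↔
      ∃ n : ℕ, ∀ a ∈ D, ∀ b ∈ D, f ⁅a, b⁆ ∈ Subgroup.upperCentralSeries H n := by
  simp only [AlmostAbelian, Subgroup.mem_map, forall_exists_index, and_imp,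
    forall_apply_eq_imp_iff₂, map_commutatorElement]
  rfl

end

/-- A subgroup `E` of `G` is almost abelian in `G` if and only if its image
`E Z(G)/Z(G)` under the quotient map `G → G/Z(G)` is almost abelian in `G/Z(G)`. -/
theorem almostAbelian_iff_map_center {G : Type*} [Group G] (E : Subgroup G) :
    AlmostAbelian E ↔
      AlmostAbelian (E.map (QuotientGroup.mk' (Subgroup.center G))) := by
  rw [almostAbelian_map_iff, almostAbelian_iff_exists_succ]
  simp only [QuotientGroup.mk'_apply, mk_mem_upperCentralSeries_quotient_center_iff]
end

section
/- Let G be a group, γ an automorphism of G, and v ∈ G an element of finite odd order such that γ(v) = v⁻¹. If w ∈ G satisfies γ(w)·w⁻¹ ∈ ⟨v⟩ (the cyclic subgroup generated by v), then there exists y ∈ ⟨v⟩ such that γ(y·w) = y·w. -/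
/-! Writing `γ w = x * w` with `x ∈ ⟨v⟩`, and using that `γ` inverts `⟨v⟩`, one gets
`γ (y * w) = y⁻¹ * x * w` for `y ∈ ⟨v⟩`. So it suffices to take `y` with `y ^ 2 = x`, which exists
because squaring is a bijection of a cyclic group of odd order. -/

theorem exists_sq_eq_of_odd_orderOf {G : Type*} [Group G] {v x : G} (hodd : Odd (orderOf v))
    (hx : x ∈ Subgroup.zpowers v) : ∃ y ∈ Subgroup.zpowers v, y ^ 2 = x := by
  have hcop : (Nat.card (Subgroup.zpowers v)).Coprime 2 := by
    rwa [Nat.card_zpowers, Nat.coprime_two_right]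
  obtain ⟨y, hy⟩ := hcop.pow_left_bijective.surjective ⟨x, hx⟩
  exact ⟨y, y.2, congrArg Subtype.val hy⟩

theorem map_eq_inv_of_mem_zpowers {G F : Type*} [Group G] [FunLike F G G] [MonoidHomClass F G G]
    {f : F} {v y : G} (hv : f v = v⁻¹) (hy : y ∈ Subgroup.zpowers v) : f y = y⁻¹ := by
  obtain ⟨k, rfl⟩ := hy
  rw [map_zpow, hv, inv_zpow]

theorem exists_gamma_stable_rep_of_odd_general {G : Type*} [Group G] (γ : G ≃* G) (v : G)
    (hodd : Odd (orderOf v)) (hv : γ v = v⁻¹) (w : G)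
    (hw : γ w * w⁻¹ ∈ Subgroup.zpowers v) :
    ∃ y ∈ Subgroup.zpowers v, γ (y * w) = y * w := by
  obtain ⟨y, hy, hsq⟩ := exists_sq_eq_of_odd_orderOf hodd hw
  have hγw : γ w = y ^ 2 * w := by rw [hsq, inv_mul_cancel_right]
  refine ⟨y, hy, ?_⟩
  rw [map_mul, map_eq_inv_of_mem_zpowers hv hy, hγw, sq, mul_assoc, inv_mul_cancel_left]

/-- Let `γ` be an automorphism of a group `G` and `v ∈ G` an element of finite odd order
with `γ v = v⁻¹`. If `w ∈ G` satisfies `γ w * w⁻¹ ∈ ⟨v⟩`, then there is `y ∈ ⟨v⟩` such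
that `y * w` is fixed by `γ`. -/
theorem exists_gamma_stable_rep_of_odd {G : Type*} [Group G] (γ : G ≃* G) (v : G)
    (hodd : Odd (orderOf v)) (hfin : IsOfFinOrder v) (hv : γ v = v⁻¹) (w : G)
    (hw : γ w * w⁻¹ ∈ Subgroup.zpowers v) :
    ∃ y ∈ Subgroup.zpowers v, γ (y * w) = y * w :=
  exists_gamma_stable_rep_of_odd_general γ v hodd hv w hw
end

section
/- Let G be a group, γ an automorphism of G, v ∈ G an element of finite order with γ(v) = v³, and ε : G → {±1} a group homomorphism with ε(v) = −1 and ε(γ(x)) = ε(x) for all x ∈ G. If w ∈ G satisfies γ(w)·w⁻¹ ∈ ⟨v⟩ (the cyclic subgroup generated by v), then there exists y ∈ ⟨v⟩ such that γ(y·w) = y·w. -/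
/-!
The sign character is `γ`-invariant, so it is trivial on `γ w * w⁻¹ = v ^ k`; since
`ε v = -1`, the exponent is even, `k = 2m`. As `γ` acts on `⟨v⟩` by cubing, `y := v ^ (-m)`
satisfies `γ y * y⁻¹ = v ^ (-2m)`, which cancels `γ w * w⁻¹`.
-/

theorem even_of_map_zpow_eq_one {G : Type*} [Group G] {ε : G →* ℤˣ} {v : G} (hεv : ε v = -1)
    {k : ℤ} (h : ε (v ^ k) = 1) : Even k := by
  rw [map_zpow, hεv] at h
  exact (Int.negOnePow_eq_one_iff k).mp h

theorem map_zpow_neg_mul_eq_of_map_mul_inv_eq {G : Type*} [Group G] (γ : G →* G) {v w : G}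
    {d : ℕ} (hv : γ v = v ^ (d + 1)) (m : ℤ) (hw : γ w * w⁻¹ = v ^ (d * m)) :
    γ (v ^ (-m) * w) = v ^ (-m) * w := by
  have hγw : γ w = v ^ (d * m) * w := by rw [← hw, inv_mul_cancel_right]
  rw [map_mul, hγw, map_zpow, hv, ← zpow_natCast, ← zpow_mul, ← mul_assoc, ← zpow_add]
  congr 2
  push_cast
  ring

theorem exists_gamma_stable_rep_of_sign_general {G : Type*} [Group G] (γ : G ≃* G) (v : G)
    (hv : γ v = v ^ 3) (ε : G →* ℤˣ) (hεv : ε v = -1)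
    (hεγ : ∀ x : G, ε (γ x) = ε x) (w : G)
    (hw : γ w * w⁻¹ ∈ Subgroup.zpowers v) :
    ∃ y ∈ Subgroup.zpowers v, γ (y * w) = y * w := by
  obtain ⟨k, hk⟩ := Subgroup.mem_zpowers_iff.mp hw
  have hk_even : Even k :=
    even_of_map_zpow_eq_one hεv (by rw [hk, map_mul, map_inv, hεγ, mul_inv_cancel])
  obtain ⟨m, rfl⟩ := hk_even
  refine ⟨v ^ (-m), Subgroup.zpow_mem_zpowers v (-m), ?_⟩
  exact map_zpow_neg_mul_eq_of_map_mul_inv_eq γ.toMonoidHom (d := 2) hv m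
    (by rw [Nat.cast_ofNat, two_mul]; exact hk.symm)

/-- Let `γ` be an automorphism of a group `G`, `v ∈ G` an element of finite order with
`γ v = v³`, and `ε : G → {±1}` a group homomorphism with `ε v = -1` which is invariant
under `γ`. If `w ∈ G` satisfies `γ w * w⁻¹ ∈ ⟨v⟩`, then there is `y ∈ ⟨v⟩` such that
`y * w` is fixed by `γ`. -/
theorem exists_gamma_stable_rep_of_sign {G : Type*} [Group G] (γ : G ≃* G) (v : G)
    (hfin : IsOfFinOrder v) (hv : γ v = v ^ 3) (ε : G →* ℤˣ) (hεv : ε v = -1)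
    (hεγ : ∀ x : G, ε (γ x) = ε x) (w : G)
    (hw : γ w * w⁻¹ ∈ Subgroup.zpowers v) :
    ∃ y ∈ Subgroup.zpowers v, γ (y * w) = y * w :=
  exists_gamma_stable_rep_of_sign_general γ v hv ε hεv hεγ w hw
end

section
/- Let m, e ≥ 1 be natural numbers and set N = m·e. Let ρ_m denote the reversal permutation of {0, 1, …, m−1} given by j ↦ m−1−j, and ρ_N the reversal permutation of {0, 1, …, N−1} given by x ↦ N−1−x. Then for every permutation σ of {0, …, m−1} commuting with ρ_m, there exists a permutation w of {0, …, N−1} commuting with ρ_N such that w maps the j-th block {j·e, j·e+1, …, j·e+e−1} onto the σ(j)-th block for every j; equivalently, ⌊w(x)/e⌋ = σ(⌊x/e⌋) for all x. -/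
/-! Under `finProdFinEquiv : Fin m × Fin e ≃ Fin (m * e)`, i.e. `x ↔ (x / e, x % e)`, the reversal of
`Fin (m * e)` is the reversal in both coordinates, so `σ × id` transported along it commutes with
the reversal and moves blocks by `σ`. -/

open Equiv

namespace Fin

variable {m n : ℕ}

theorem rev_finProdFinEquiv (p : Fin m × Fin n) :
    (finProdFinEquiv p).rev = finProdFinEquiv (p.1.rev, p.2.rev) := by
  obtain ⟨⟨a, ha⟩, ⟨b, hb⟩⟩ := p
  ext
  simp only [finProdFinEquiv_apply_val, val_rev]
  -- writing `m = a + 1 + k` makes both sides linear in the atoms `n * a` and `n * k`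
  obtain ⟨k, rfl⟩ : ∃ k, m = a + 1 + k := ⟨m - (a + 1), by omega⟩
  rw [show a + 1 + k - (a + 1) = k by omega, Nat.mul_comm _ n]
  simp only [Nat.mul_add, Nat.mul_one]
  omega

theorem divNat_finProdFinEquiv (p : Fin m × Fin n) : (finProdFinEquiv p).divNat = p.1 :=
  congrArg Prod.fst (finProdFinEquiv.symm_apply_apply p)

theorem divNat_permCongr_prodCongr (σ : Perm (Fin m)) (τ : Perm (Fin n)) (x : Fin (m * n)) :
    (finProdFinEquiv.permCongr (σ.prodCongr τ) x).divNat = σ x.divNat := by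
  rw [permCongr_apply, divNat_finProdFinEquiv]
  rfl

theorem commute_revPerm_permCongr_prodCongr {σ : Perm (Fin m)} {τ : Perm (Fin n)}
    (hσ : Commute σ revPerm) (hτ : Commute τ revPerm) :
    Commute (finProdFinEquiv.permCongr (σ.prodCongr τ)) revPerm := by
  refine Perm.ext <| finProdFinEquiv.surjective.forall.2 fun p => ?_
  have hσ' := DFunLike.congr_fun hσ.eq p.1
  have hτ' := DFunLike.congr_fun hτ.eq p.2
  simp only [Perm.mul_apply, revPerm_apply] at hσ' hτ' ⊢
  simp [rev_finProdFinEquiv, hσ', hτ']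

end Fin

theorem exists_rev_commuting_block_lift_general (m e : ℕ)
    (σ : Equiv.Perm (Fin m)) (hσ : Commute σ Fin.revPerm) :
    ∃ w : Equiv.Perm (Fin (m * e)), Commute w Fin.revPerm ∧
      ∀ x : Fin (m * e), Fin.divNat (w x) = σ (Fin.divNat x) :=
  ⟨_, Fin.commute_revPerm_permCongr_prodCongr hσ (Commute.one_left _),
    Fin.divNat_permCongr_prodCongr σ 1⟩

/-- Let `N = m * e`. Every permutation `σ` of the block indices `{0,…,m-1}` commuting with
the reversal `j ↦ m-1-j` lifts to a permutation `w` of `{0,…,N-1}` commuting with the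
reversal `x ↦ N-1-x` and mapping the `j`-th block `{j*e,…,j*e+e-1}` onto the `σ(j)`-th
block, i.e. `⌊w(x)/e⌋ = σ(⌊x/e⌋)` for all `x`. -/
theorem exists_rev_commuting_block_lift (m e : ℕ) (hm : 1 ≤ m) (he : 1 ≤ e)
    (σ : Equiv.Perm (Fin m)) (hσ : Commute σ Fin.revPerm) :
    ∃ w : Equiv.Perm (Fin (m * e)), Commute w Fin.revPerm ∧
      ∀ x : Fin (m * e), Fin.divNat (w x) = σ (Fin.divNat x) :=
  exists_rev_commuting_block_lift_general m e σ hσ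
end

section
/- Let m ≥ 3 and let G be the semidirect product (Z/2^mZ × Z/2^mZ) ⋊ Z/2Z, where the nontrivial element of Z/2Z acts by swapping the two coordinates. Then G has no normal subgroup isomorphic to the dihedral group of order 8. -/
/-!
Every element of the dihedral group of order 8 satisfies `x ^ 4 = 1`, and that group is
nonabelian, so a dihedral subgroup `H` cannot lie in the abelian base and contains some `g`
that swaps the coordinates. If `H` is normal it also contains the commutator of `(t, 1)` and `g`,
which is `(t, t⁻¹)`; for `t` a generator of `Z/2^mZ` this has order `2 ^ m > 4`.
-/

/-- The coordinate-swap automorphism of `M × M`. -/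
def swapAut (M : Type*) [CommGroup M] : MulAut (M × M) :=
  (MulEquiv.prodComm : M × M ≃* M × M)

lemma swapAut_sq (M : Type*) [CommGroup M] : swapAut M ^ 2 = 1 := by
  ext x <;> simp [swapAut, sq, MulAut.mul_apply]

/-- The action of `Z/2Z` on `M × M` in which the nontrivial element swaps the two
coordinates. -/
def swapHom (M : Type*) [CommGroup M] : Multiplicative (ZMod 2) →* MulAut (M × M) where
  toFun a := swapAut M ^ (Multiplicative.toAdd a).val
  map_one' := by simp
  map_mul' a b := by
    have key : ∀ n : ℕ, swapAut M ^ (n % 2) = swapAut M ^ n := fun n => by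
      conv_rhs => rw [← Nat.div_add_mod n 2]
      rw [pow_add, pow_mul, swapAut_sq, one_pow, one_mul]
    show swapAut M ^ (Multiplicative.toAdd (a * b)).val = _
    rw [toAdd_mul, ZMod.val_add, key, pow_add]

/-- The wreath product `C_{2^m} ≀ C_2`, i.e. the semidirect product
`(Z/2^mZ × Z/2^mZ) ⋊ Z/2Z` where the nontrivial element of `Z/2Z` swaps the two
coordinates. -/
abbrev WreathC2 (m : ℕ) : Type :=
  (Multiplicative (ZMod (2 ^ m)) × Multiplicative (ZMod (2 ^ m)))
    ⋊[swapHom (Multiplicative (ZMod (2 ^ m)))] Multiplicative (ZMod 2)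

open scoped commutatorElement

lemma Subgroup.pow_exponent_eq_one_of_mulEquiv {G K : Type*} [Group G] [Monoid K]
    {H : Subgroup G} (e : H ≃* K) {x : G} (hx : x ∈ H) : x ^ Monoid.exponent K = 1 := by
  rw [← Monoid.exponent_eq_of_mulEquiv e]
  exact congrArg Subtype.val (Monoid.pow_exponent_eq_one (⟨x, hx⟩ : H))

lemma MulEquiv.isMulCommutative {A B : Type*} [Mul A] [Mul B] (e : A ≃* B)
    [IsMulCommutative A] : IsMulCommutative B :=
  isMulCommutative_iff.2 fun a b => e.symm.injective (by simp [(IsMulCommutative.is_comm).comm])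

namespace SemidirectProduct

variable {N G : Type*} [CommGroup N] [Group G] {φ : G →* MulAut N}

lemma commutatorElement_inl (n : N) (g : N ⋊[φ] G) :
    ⁅(inl n : N ⋊[φ] G), g⁆ = inl (n * (φ g.right n)⁻¹) := by
  ext <;> simp [commutatorElement_def, mul_right_comm _ _ g.left⁻¹]

lemma exists_mem_right_ne_one {H : Subgroup (N ⋊[φ] G)} (hH : ¬ IsMulCommutative H) :
    ∃ g ∈ H, g.right ≠ 1 := by
  by_contra! hbase
  refine hH (isMulCommutative_iff.2 fun x y => Subtype.ext ?_)
  ext <;> simp [hbase _ x.2, hbase _ y.2, mul_comm]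

end SemidirectProduct

lemma swapHom_apply_of_ne_one (M : Type*) [CommGroup M] {s : Multiplicative (ZMod 2)}
    (hs : s ≠ 1) : swapHom M s = swapAut M := by
  obtain rfl : s = Multiplicative.ofAdd 1 := by revert s; decide
  exact pow_one _

lemma orderOf_ofAdd_one (n : ℕ) : orderOf (Multiplicative.ofAdd (1 : ZMod n)) = n := by
  rw [orderOf_ofAdd_eq_addOrderOf, ZMod.addOrderOf_one]

/-- For `m ≥ 3`, the wreath product `C_{2^m} ≀ C_2 = (Z/2^mZ × Z/2^mZ) ⋊ Z/2Z` (swap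
action) has no normal subgroup isomorphic to the dihedral group of order 8. -/
theorem wreath_no_normal_dihedral (m : ℕ) (hm : 3 ≤ m) :
    ¬ ∃ H : Subgroup (WreathC2 m), H.Normal ∧ Nonempty (H ≃* DihedralGroup 4) := by
  rintro ⟨H, hH, ⟨e⟩⟩
  have hexp : ∀ x ∈ H, x ^ 4 = 1 := fun x hx => by
    simpa [DihedralGroup.exponent, show lcm 4 2 = 4 by rfl] using
      H.pow_exponent_eq_one_of_mulEquiv e hx
  obtain ⟨g, hg, hgr⟩ : ∃ g ∈ H, g.right ≠ 1 :=
    SemidirectProduct.exists_mem_right_ne_one fun _ =>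
      DihedralGroup.not_commutative (by decide) (by decide) e.isMulCommutative
  set t := Multiplicative.ofAdd (1 : ZMod (2 ^ m))
  have hc : ⁅(SemidirectProduct.inl (t, 1) : WreathC2 m), g⁆ ∈ H :=
    H.mul_mem (hH.conj_mem g hg _) (H.inv_mem hg)
  rw [SemidirectProduct.commutatorElement_inl, swapHom_apply_of_ne_one _ hgr] at hc
  have ht : t ^ 4 = 1 := by simpa [swapAut, ← map_pow] using congrArg (·.left.1) (hexp _ hc)
  have hdvd := orderOf_dvd_of_pow_eq_one ht
  rw [orderOf_ofAdd_one, show 4 = 2 ^ 2 by rfl, Nat.pow_dvd_pow_iff_le_right (by norm_num)] at hdvd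
  omega
end
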